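/- Let α ∈ (0,1). Then there exists a positive integer K such that for every integer k ≥ K, (2k)^α · sin(π/(2k))^α · cos(α(π/2 − π/(2k))) > π^α · cos(απ/2). Geometrically, for k sufficiently large, the asymptotic line a − b = (2k)^α sin(π/(2k))^α cos(α(π/2 − π/(2k))) of the curve Γ_0 lies strictly below the asymptotic line a − b = π^α cos(απ/2) of the curve Γ. -/

import Mathlib

open Real Filter

/-! With `x = π / (2k)` the left-hand side is `π^α (sin x / x)^α cos(απ/2 - αx)`, and
`(sin x / x)^α ≥ sin x / x`. Moving the cosine's argument by `-αx` gains a first-order term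
`αx sin(απ/2)`, while replacing `x` by `sin x` costs only `x³/6`; so the inequality holds as
soon as `x` is small. -/

lemma cos_sub_sub_cos_ge {θ y : ℝ} (hS : 0 ≤ sin θ) (hC : 0 ≤ cos θ) (hy0 : 0 ≤ y)
    (hy : y ≤ π / 2) :
    y * (2 / π * sin θ - cos θ * y / 2) ≤ cos (θ - y) - cos θ := by
  have hsin : sin θ * (2 / π * y) ≤ sin θ * sin y :=
    mul_le_mul_of_nonneg_left (mul_le_sin hy0 hy) hS
  have hcos : cos θ * (1 - y ^ 2 / 2) ≤ cos θ * cos y :=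
    mul_le_mul_of_nonneg_left one_sub_sq_div_two_le_cos hC
  rw [cos_sub]
  nlinarith

lemma lt_one_of_lt_mul_sin_div_pi {θ α x : ℝ} (hα0 : 0 ≤ α) (hα1 : α ≤ 1)
    (hx : x < α * sin θ / π) : x < 1 := by
  refine hx.trans ((div_lt_one pi_pos).2 ?_)
  nlinarith [sin_le_one θ, pi_gt_three, mul_le_of_le_one_left (zero_le_one' ℝ) hα1]

lemma mul_cos_lt_sin_mul_cos_sub {θ α x : ℝ} (hC : 0 ≤ cos θ) (hα0 : 0 < α)
    (hα1 : α ≤ 1) (hx0 : 0 < x) (hx : x < α * sin θ / π) :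
    x * cos θ < sin x * cos (θ - α * x) := by
  have hS : 0 < sin θ :=
    pos_of_mul_pos_right ((div_pos_iff_of_pos_right pi_pos).1 (hx0.trans hx)) hα0.le
  have hxS : π * x < α * sin θ := by rwa [lt_div_iff₀' pi_pos] at hx
  have hαx : α * x ≤ π / 2 := by
    nlinarith [lt_one_of_lt_mul_sin_div_pi hα0.le hα1 hx, pi_gt_three]
  have hgain := cos_sub_sub_cos_ge hS.le hC (by positivity) hαx
  -- `sin x cos(θ - αx) - x cos θ = (sin x - x) cos(θ - αx) + x (cos(θ - αx) - cos θ)`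
  have hloss : sin x - x ≤ (sin x - x) * cos (θ - α * x) := by
    nlinarith [sin_lt hx0, cos_le_one (θ - α * x)]
  have hcube := sin_ge_sub_cube hx0.le
  have hquad : x ^ 3 / 6 < α * x * x * (2 / π * sin θ - cos θ * (α * x) / 2) := by
    have hcos1 : cos θ * α * α ≤ 1 := by
      nlinarith [cos_le_one θ, mul_le_one₀ hα1 hα0.le hα1]
    have hbracket : 2 * x / 3 < 2 / π * sin θ * α - cos θ * α * α * x / 2 := by
      have : 2 * x < 2 / π * sin θ * α := by
        rw [div_mul_eq_mul_div, div_mul_eq_mul_div, lt_div_iff₀ pi_pos]; linarith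
      nlinarith
    nlinarith [mul_lt_mul_of_pos_left hbracket (pow_pos hx0 2)]
  nlinarith [mul_le_mul_of_nonneg_left hgain hx0.le]

lemma cos_lt_sin_div_rpow_mul_cos_sub {θ α x : ℝ} (hC : 0 ≤ cos θ) (hα0 : 0 < α)
    (hα1 : α ≤ 1) (hx0 : 0 < x) (hx : x < α * sin θ / π) :
    cos θ < (sin x / x) ^ α * cos (θ - α * x) := by
  have hmain := mul_cos_lt_sin_mul_cos_sub hC hα0 hα1 hx0 hx
  have hratio : cos θ < sin x / x * cos (θ - α * x) := by
    rwa [div_mul_eq_mul_div, lt_div_iff₀' hx0]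
  have hsin : 0 < sin x / x := by
    refine div_pos (sin_pos_of_pos_of_lt_pi hx0 ?_) hx0
    linarith [lt_one_of_lt_mul_sin_div_pi hα0.le hα1 hx, pi_gt_three]
  have hcos : 0 < cos (θ - α * x) := pos_of_mul_pos_right (hC.trans_lt hratio) hsin.le
  calc cos θ < sin x / x * cos (θ - α * x) := hratio
    _ ≤ (sin x / x) ^ α * cos (θ - α * x) := by
      gcongr
      exact self_le_rpow_of_le_one hsin.le ((div_le_one hx0).2 (sin_lt hx0).le) hα1

lemma rpow_mul_sin_rpow_eq {c x α : ℝ} (hc : 0 ≤ c) (hx : 0 < x) (hsin : 0 ≤ sin x) :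
    c ^ α * sin x ^ α = (c * x) ^ α * (sin x / x) ^ α := by
  rw [← mul_rpow hc hsin, ← mul_rpow (by positivity) (div_nonneg hsin hx.le)]
  field_simp

theorem gl_asymptotic_line_eventually_below (α : ℝ) (hα : α ∈ Set.Ioo (0:ℝ) 1) :
    ∃ K : ℕ, 0 < K ∧ ∀ k : ℕ, K ≤ k →
      (2 * (k:ℝ)) ^ α * Real.sin (π / (2 * (k:ℝ))) ^ α *
          Real.cos (α * (π / 2 - π / (2 * (k:ℝ)))) >
        π ^ α * Real.cos (α * π / 2) := by
  obtain ⟨hα0, hα1⟩ := hα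
  have hC : 0 < cos (α * π / 2) :=
    cos_pos_of_mem_Ioo ⟨by nlinarith [pi_pos], by nlinarith [pi_pos]⟩
  have hS : 0 < sin (α * π / 2) := sin_pos_of_pos_of_lt_pi (by positivity) (by nlinarith [pi_pos])
  have hsmall : ∀ᶠ k : ℕ in atTop, π / (2 * k) < α * sin (α * π / 2) / π := by
    have := tendsto_const_div_atTop_nhds_zero_nat (π / 2 : ℝ)
    simpa only [div_div] using this.eventually (gt_mem_nhds (by positivity))
  obtain ⟨K, hK⟩ := eventually_atTop.1 (hsmall.and (eventually_gt_atTop 0))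
  refine ⟨K + 1, K.succ_pos, fun k hk => ?_⟩
  obtain ⟨hx, hk0⟩ := hK k (by omega)
  set x := π / (2 * (k:ℝ)) with hx_def
  have hx0 : 0 < x := by positivity
  have hsin : 0 < sin x := sin_pos_of_pos_of_lt_pi hx0
    (by linarith [lt_one_of_lt_mul_sin_div_pi hα0.le hα1.le hx, pi_gt_three])
  have hkx : 2 * (k:ℝ) * x = π := by rw [hx_def]; field_simp
  rw [rpow_mul_sin_rpow_eq (by positivity) hx0 hsin.le, hkx, mul_assoc, gt_iff_lt,
    mul_lt_mul_iff_right₀ (rpow_pos_of_pos pi_pos α), mul_sub, ← mul_div_assoc]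
  exact cos_lt_sin_div_rpow_mul_cos_sub hC.le hα0 hα1.le hx0 hx
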